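/- arXiv:2110.05250 — 3 statements merged into one kernel-verified Lean document; each statement's English description precedes it below -/
import Mathlib

section
/- A closed, convex set C in a Banach space X is compactivorous if and only if for every null sequence x ∈ c₀(X) there exist δ > 0 and z ∈ X such that z + δ·xₙ ∈ C for every n (where the sequence is extended with the negatives x and −x interleaved, i.e., z + δ·Σ(x) ⊆ C with Σ the symmetrisation operator). -/
open Filter Topology

/-- The symmetrisation of a sequence: `(x₀, x₁, …) ↦ (x₀, −x₀, x₁, −x₁, …)`. -/
def symSeq {X : Type*} [NormedAddCommGroup X] (x : ℕ → X) : ℕ → X :=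
  fun n => if n % 2 = 0 then x (n / 2) else -(x (n / 2))

/-- `E` is compactivorous: it contains a translated rescaling of every compact set. -/
def Compactivorous {X : Type*} [NormedAddCommGroup X] [NormedSpace ℝ X] (E : Set X) : Prop :=
  ∀ K : Set X, IsCompact K → ∃ (z : X) (δ : ℝ), 0 < δ ∧ (fun k => z + δ • k) '' K ⊆ E

private lemma sum_w (M : ℕ) :
    ∑ m ∈ Finset.range M, (1/4 : ℝ) * (3/4)^m = 1 - (3/4)^M := by
  induction M with
  | zero => simp
  | succ n ih => rw [Finset.sum_range_succ, ih, pow_succ]; ring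

/-- The telescoping difference sequence associated to a family of approximations. -/
private def dseq {X : Type*} [NormedAddCommGroup X] (a : ℕ → X → X) : ℕ → X → X
  | 0, k => a 0 k
  | (n+1), k => a (n+1) k - a n k

private lemma dseq_sum {X : Type*} [NormedAddCommGroup X] (a : ℕ → X → X) (k : X) (N : ℕ) :
    ∑ m ∈ Finset.range (N+1), dseq a m k = a N k := by
  induction N with
  | zero => simp [dseq]
  | succ n ih => rw [Finset.sum_range_succ, ih]; simp [dseq]

/-- The finite sets of possible values of the difference sequence. -/
private def Vset {X : Type*} [NormedAddCommGroup X] (t : ℕ → Set X) (M : ℝ) : ℕ → Set X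
  | 0 => {v | v ∈ t 0 ∧ ‖v‖ ≤ M + 1}
  | (n+1) => {v | (∃ p ∈ t (n+1), ∃ q ∈ t n, v = p - q) ∧ ‖v‖ ≤ 3 * (1/2)^(n+1)}

private lemma Vset_finite {X : Type*} [NormedAddCommGroup X] {t : ℕ → Set X}
    (ht : ∀ n, (t n).Finite) (M : ℝ) (n : ℕ) : (Vset t M n).Finite := by
  cases n with
  | zero => exact (ht 0).subset fun v hv => hv.1
  | succ n =>
      refine ((ht (n+1)).image2 (· - ·) (ht n)).subset ?_
      rintro v ⟨⟨p, hp, q, hq, rfl⟩, -⟩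
      exact Set.mem_image2_of_mem hp hq

private lemma Vset_norm {X : Type*} [NormedAddCommGroup X] {t : ℕ → Set X} {M : ℝ}
    (n : ℕ) {v : X} (hv : v ∈ Vset t M n) : ‖v‖ ≤ (max (M+1) 3) * (1/2)^n := by
  cases n with
  | zero =>
      simp only [Vset] at hv
      simpa using le_trans hv.2 (le_max_left _ _)
  | succ m =>
      simp only [Vset, Set.mem_setOf_eq] at hv
      refine le_trans hv.2 ?_
      exact mul_le_mul_of_nonneg_right (le_max_right _ _) (by positivity)

private lemma key_pow (n : ℕ) : ((1/4 : ℝ) * (3/4)^n)⁻¹ * (1/2)^n = 4 * (2/3)^n := by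
  rw [mul_inv, ← inv_pow, mul_assoc, ← mul_pow]
  norm_num

/-- Grothendieck compactness principle: a compact set in a normed space is contained in the
closed convex hull of the range of a null sequence. -/
private theorem grothendieck {X : Type*} [NormedAddCommGroup X] [NormedSpace ℝ X]
    {K : Set X} (hK : IsCompact K) :
    ∃ x : ℕ → X, Tendsto x atTop (𝓝 0) ∧ K ⊆ closure (convexHull ℝ (Set.range x)) := by
  obtain ⟨M, hM⟩ := isBounded_iff_forall_norm_le.1 hK.isBounded
  have hnet : ∀ n : ℕ, ∃ t : Set X, t.Finite ∧ K ⊆ ⋃ y ∈ t, Metric.ball y ((1/2)^n) :=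
    fun n => Metric.totallyBounded_iff.1 hK.totallyBounded _ (by positivity)
  choose t htfin htsub using hnet
  have hex : ∀ (n : ℕ) (k : X), k ∈ K → ∃ y, y ∈ t n ∧ dist k y < (1/2)^n := by
    intro n k hk
    obtain ⟨y, hy, hky⟩ := Set.mem_iUnion₂.1 (htsub n hk)
    exact ⟨y, hy, Metric.mem_ball.1 hky⟩
  choose! a hat had using hex
  have hwpos : ∀ n : ℕ, (0:ℝ) < (1/4) * (3/4)^n := fun n => by positivity
  -- the difference sequence takes values in the finite sets `Vset`
  have hdV : ∀ (n : ℕ) (k : X), k ∈ K → dseq a n k ∈ Vset t M n := by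
    intro n k hk
    cases n with
    | zero =>
        refine ⟨hat 0 k hk, ?_⟩
        have h1 : dist k (a 0 k) < 1 := by simpa using had 0 k hk
        have h2 : ‖a 0 k‖ - ‖k‖ ≤ dist k (a 0 k) := by
          rw [dist_comm, dist_eq_norm]; exact norm_sub_norm_le _ _
        have h3 := hM k hk
        simp only [dseq]; linarith
    | succ n =>
        refine ⟨⟨a (n+1) k, hat (n+1) k hk, a n k, hat n k hk, rfl⟩, ?_⟩
        have h1 := had (n+1) k hk
        have h2 := had n k hk
        have h3 : ‖a (n+1) k - a n k‖ ≤ dist (a (n+1) k) k + dist k (a n k) := by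
          rw [← dist_eq_norm]; exact dist_triangle _ _ _
        rw [dist_comm] at h1
        have hpow : (1/2:ℝ)^n = 2 * (1/2)^(n+1) := by rw [pow_succ]; ring
        simp only [dseq]; linarith
  -- enumerate the finite sets by lists
  have hVfin := Vset_finite htfin M
  have hlist : ∀ n : ℕ, ∃ l : List X, ∀ v, v ∈ l ↔ v ∈ Vset t M n := fun n =>
    ⟨(hVfin n).toFinset.toList, fun v => by
      simp [Finset.mem_toList, Set.Finite.mem_toFinset]⟩
  choose L hL using hlist
  set B : ℝ := max (M + 1) 3 with hB
  have hBpos : (0:ℝ) < B := lt_of_lt_of_le (by norm_num) (le_max_right _ _)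
  -- the norm bound on the rescaled enumerated vectors
  have hebound : ∀ n i : ℕ,
      ‖((1/4 : ℝ) * (3/4)^n)⁻¹ • (L n).getD i 0‖ ≤ 4 * B * (2/3)^n := by
    intro n i
    by_cases hi : i < (L n).length
    · have hv : (L n).getD i 0 ∈ Vset t M n := by
        refine (hL n _).1 ?_
        rw [List.getD_eq_getElem _ _ hi]
        exact List.getElem_mem _
      have hvn : ‖(L n).getD i 0‖ ≤ B * (1/2)^n := Vset_norm n hv
      calc ‖((1/4 : ℝ) * (3/4)^n)⁻¹ • (L n).getD i 0‖
          = ((1/4 : ℝ) * (3/4)^n)⁻¹ * ‖(L n).getD i 0‖ := by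
            rw [norm_smul, Real.norm_eq_abs, abs_of_pos (inv_pos.2 (hwpos n))]
        _ ≤ ((1/4 : ℝ) * (3/4)^n)⁻¹ * (B * (1/2)^n) :=
            mul_le_mul_of_nonneg_left hvn (inv_nonneg.2 (hwpos n).le)
        _ = 4 * B * (2/3)^n := by
            rw [show ((1/4 : ℝ) * (3/4)^n)⁻¹ * (B * (1/2)^n)
                = B * (((1/4 : ℝ) * (3/4)^n)⁻¹ * (1/2)^n) from by ring, key_pow]
            ring
    · push_neg at hi
      rw [List.getD_eq_default _ _ hi, smul_zero, norm_zero]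
      positivity
  refine ⟨fun p => ((1/4 : ℝ) * (3/4)^(Nat.unpair p).1)⁻¹ •
      (L (Nat.unpair p).1).getD (Nat.unpair p).2 0, ?_, ?_⟩
  · -- the sequence is null
    rw [NormedAddCommGroup.tendsto_nhds_zero]
    intro ε hε
    have hgeo : Tendsto (fun n : ℕ => 4 * B * (2/3 : ℝ)^n) atTop (𝓝 0) := by
      simpa using (tendsto_pow_atTop_nhds_zero_of_lt_one (by norm_num)
        (by norm_num : (2/3:ℝ) < 1)).const_mul (4 * B)
    obtain ⟨N, hN⟩ := eventually_atTop.1 (hgeo.eventually (gt_mem_nhds hε))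
    set mL : ℕ := ((Finset.range N).sup fun n => (L n).length) + 1 with hmL
    have hSfin : {p : ℕ | ε ≤ ‖((1/4 : ℝ) * (3/4)^(Nat.unpair p).1)⁻¹ •
        (L (Nat.unpair p).1).getD (Nat.unpair p).2 0‖}.Finite := by
      apply Set.Finite.subset
        (((Set.finite_Iio N).prod (Set.finite_Iio mL)).image fun q : ℕ × ℕ => Nat.pair q.1 q.2)
      intro p hp
      simp only [Set.mem_setOf_eq] at hp
      have hn : (Nat.unpair p).1 < N := by
        by_contra h
        push_neg at h
        exact absurd (lt_of_le_of_lt (le_trans hp (hebound _ _)) (hN _ h)) (lt_irrefl ε)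
      have hi : (Nat.unpair p).2 < (L (Nat.unpair p).1).length := by
        by_contra h
        push_neg at h
        rw [List.getD_eq_default _ _ h, smul_zero, norm_zero] at hp
        linarith
      refine ⟨((Nat.unpair p).1, (Nat.unpair p).2), ⟨hn, ?_⟩, Nat.pair_unpair p⟩
      have : (L (Nat.unpair p).1).length ≤ (Finset.range N).sup fun n => (L n).length :=
        Finset.le_sup (f := fun n => (L n).length) (Finset.mem_range.2 hn)
      simp only [Set.mem_Iio, hmL]
      omega
    have hco := Set.Finite.eventually_cofinite_notMem hSfin
    rw [Nat.cofinite_eq_atTop] at hco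
    filter_upwards [hco] with p hp
    exact not_le.1 hp
  · -- K is contained in the closed convex hull
    intro k hk
    set x : ℕ → X := fun p => ((1/4 : ℝ) * (3/4)^(Nat.unpair p).1)⁻¹ •
      (L (Nat.unpair p).1).getD (Nat.unpair p).2 0 with hxdef
    have hzero_mem : (0:X) ∈ Set.range x := by
      refine ⟨Nat.pair 0 (L 0).length, ?_⟩
      simp only [hxdef, Nat.unpair_pair]
      rw [List.getD_eq_default _ _ (le_refl _), smul_zero]
    have hdmem : ∀ m : ℕ, ((1/4 : ℝ) * (3/4)^m)⁻¹ • dseq a m k ∈ Set.range x := by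
      intro m
      have hmemL : dseq a m k ∈ L m := (hL m _).2 (hdV m k hk)
      obtain ⟨i, hi, hget⟩ := List.getElem_of_mem hmemL
      refine ⟨Nat.pair m i, ?_⟩
      simp only [hxdef, Nat.unpair_pair]
      rw [List.getD_eq_getElem _ _ hi, hget]
    have happrox : ∀ N : ℕ, a N k ∈ convexHull ℝ (Set.range x) := by
      intro N
      have hmem := (convex_convexHull ℝ (Set.range x)).sum_mem
        (t := Finset.range (N+2))
        (w := fun m => if m ≤ N then (1/4 : ℝ) * (3/4)^m else (3/4)^(N+1))
        (z := fun m => if m ≤ N then ((1/4 : ℝ) * (3/4)^m)⁻¹ • dseq a m k else 0)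
        (fun m _ => by split_ifs <;> positivity)
        (by
          rw [Finset.sum_range_succ, if_neg (by omega : ¬ (N+1 ≤ N)),
            Finset.sum_congr rfl (fun m hm => if_pos (by
              have := Finset.mem_range.1 hm; omega)), sum_w (N+1)]
          ring)
        (fun m _ => by
          split_ifs
          · exact subset_convexHull ℝ _ (hdmem m)
          · exact subset_convexHull ℝ _ hzero_mem)
      have hsum : (∑ m ∈ Finset.range (N+2),
          (if m ≤ N then (1/4 : ℝ) * (3/4)^m else (3/4)^(N+1)) •
            (if m ≤ N then ((1/4 : ℝ) * (3/4)^m)⁻¹ • dseq a m k else 0)) = a N k := by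
        rw [Finset.sum_range_succ, if_neg (by omega : ¬ (N+1 ≤ N)),
          if_neg (by omega : ¬ (N+1 ≤ N)), smul_zero, add_zero]
        have hcong : ∀ m ∈ Finset.range (N+1),
            (if m ≤ N then (1/4 : ℝ) * (3/4)^m else (3/4)^(N+1)) •
              (if m ≤ N then ((1/4 : ℝ) * (3/4)^m)⁻¹ • dseq a m k else 0) = dseq a m k := by
          intro m hm
          have hmN : m ≤ N := by have := Finset.mem_range.1 hm; omega
          rw [if_pos hmN, if_pos hmN, smul_smul, mul_inv_cancel₀ (hwpos m).ne', one_smul]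
        rw [Finset.sum_congr rfl hcong, dseq_sum]
      rw [hsum] at hmem
      exact hmem
    have htend : Tendsto (fun N => a N k) atTop (𝓝 k) := by
      rw [tendsto_iff_dist_tendsto_zero]
      refine squeeze_zero (fun n => dist_nonneg) (fun n => ?_)
        (tendsto_pow_atTop_nhds_zero_of_lt_one (by norm_num) (by norm_num : (1/2:ℝ) < 1))
      rw [dist_comm]
      exact (had n k hk).le
    exact mem_closure_of_tendsto htend (Eventually.of_forall happrox)

/-- a closed convex set `C` in a Banach space is compactivorous iff for
every null sequence `x` there are `δ > 0` and `z` with `z + δ • Σ(x) ⊆ C`. -/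
theorem statement4 {X : Type*} [NormedAddCommGroup X] [NormedSpace ℝ X] [CompleteSpace X]
    (C : Set X) (hC : IsClosed C) (hconv : Convex ℝ C) :
    Compactivorous C ↔ ∀ x : ℕ → X, Tendsto x atTop (𝓝 (0 : X)) →
      ∃ (δ : ℝ) (z : X), 0 < δ ∧ ∀ n, z + δ • symSeq x n ∈ C := by
  constructor
  · -- forward direction
    intro hcomp x hx
    have hdiv : Tendsto (fun n : ℕ => n / 2) atTop atTop :=
      tendsto_atTop_atTop.2 fun b => ⟨2 * b, fun n hn => by omega⟩
    have hsym : Tendsto (symSeq x) atTop (𝓝 0) := by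
      have h2 : Tendsto (fun n : ℕ => x (n / 2)) atTop (𝓝 0) := hx.comp hdiv
      rw [NormedAddCommGroup.tendsto_nhds_zero] at h2 ⊢
      intro ε hε
      filter_upwards [h2 ε hε] with n hn
      have : ‖symSeq x n‖ = ‖x (n / 2)‖ := by
        simp only [symSeq]
        split_ifs <;> simp
      rw [this]
      exact hn
    obtain ⟨z, δ, hδ, hsub⟩ := hcomp _ hsym.isCompact_insert_range
    exact ⟨δ, z, hδ, fun n => hsub ⟨symSeq x n, Set.mem_insert_of_mem _ ⟨n, rfl⟩, rfl⟩⟩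
  · -- backward direction
    intro h K hK
    obtain ⟨x, hx, hKsub⟩ := grothendieck hK
    obtain ⟨δ, z, hδ, hmem⟩ := h x hx
    refine ⟨z, δ, hδ, ?_⟩
    rintro - ⟨k, hk, rfl⟩
    -- the preimage of C under the affine map is closed, convex and contains the range of x
    have hd : closure (convexHull ℝ (Set.range x)) ⊆ {w : X | z + δ • w ∈ C} := by
      apply closure_minimal
      · apply convexHull_min
        · rintro - ⟨m, rfl⟩
          have : x m = symSeq x (2 * m) := by
            simp [symSeq, Nat.mul_div_cancel_left m (by norm_num : 0 < 2)]
          simpa [Set.mem_setOf_eq, this] using hmem (2 * m)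
        · intro w1 h1 w2 h2 s r hs hr hsr
          simp only [Set.mem_setOf_eq] at h1 h2 ⊢
          have heq : z + δ • (s • w1 + r • w2) = s • (z + δ • w1) + r • (z + δ • w2) := by
            calc z + δ • (s • w1 + r • w2) = (s + r) • z + δ • (s • w1 + r • w2) := by
                  rw [hsr, one_smul]
              _ = s • (z + δ • w1) + r • (z + δ • w2) := by module
          rw [heq]
          exact hconv h1 h2 hs hr hsr
      · exact hC.preimage (continuous_const.add (continuous_const_smul δ))
    exact hd (hKsub hk)
end

section
/- Let C be a closed, convex, bounded subset of a Banach space X. Then the space F_C(X) of C-fit sequences, equipped with the C-fitting cost norm φ_C, is a Banach space (i.e., φ_C is complete on F_C(X)). -/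
open Filter Topology Pointwise

set_option linter.unusedSectionVars false
set_option maxHeartbeats 1000000

/-- `x` is a `C`-fit sequence: `x` is a null sequence and there are `z` and `λ > 0`
with `z + Σ(x) ⊆ λ • C`. -/
def CFit {X : Type*} [NormedAddCommGroup X] [NormedSpace ℝ X] (C : Set X) (x : ℕ → X) : Prop :=
  Tendsto x atTop (𝓝 (0 : X)) ∧ ∃ (z : X) (l : ℝ), 0 < l ∧ ∀ n, z + symSeq x n ∈ l • C

/-- The `C`-fitting cost `φ_C(x) = inf {‖z‖ + λ : z + Σ(x) ⊆ λ • C, λ > 0}`. -/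
noncomputable def phiC {X : Type*} [NormedAddCommGroup X] [NormedSpace ℝ X]
    (C : Set X) (x : ℕ → X) : ℝ :=
  sInf {c : ℝ | ∃ (z : X) (l : ℝ), 0 < l ∧ (∀ n, z + symSeq x n ∈ l • C) ∧ c = ‖z‖ + l}

section helpers
variable {X : Type*} [NormedAddCommGroup X] [NormedSpace ℝ X]

lemma symSeq_two_mul (x : ℕ → X) (n : ℕ) : symSeq x (2*n) = x n := by
  simp [symSeq, Nat.mul_mod_right, Nat.mul_div_cancel_left]

lemma symSeq_two_mul_add_one (x : ℕ → X) (n : ℕ) : symSeq x (2*n+1) = -x n := by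
  simp [symSeq, Nat.mul_add_mod, Nat.mul_add_div]

lemma symSeq_add (x y : ℕ → X) (n : ℕ) : symSeq (x + y) n = symSeq x n + symSeq y n := by
  unfold symSeq
  split <;> simp [Pi.add_apply] <;> abel

lemma symSeq_sub (x y : ℕ → X) (n : ℕ) : symSeq (x - y) n = symSeq x n - symSeq y n := by
  unfold symSeq
  split <;> simp [Pi.sub_apply] <;> abel

lemma mem_smul_add {C : Set X} (hconv : Convex ℝ C) {a b : ℝ} (ha : 0 ≤ a) (hb : 0 ≤ b)
    {w₁ w₂ : X} (h₁ : w₁ ∈ a • C) (h₂ : w₂ ∈ b • C) : w₁ + w₂ ∈ (a + b) • C := by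
  rw [hconv.add_smul ha hb]
  exact Set.add_mem_add h₁ h₂

lemma witness_add {C : Set X} (hconv : Convex ℝ C) {x y : ℕ → X} {z₁ z₂ : X} {l₁ l₂ : ℝ}
    (hl₁ : 0 ≤ l₁) (hl₂ : 0 ≤ l₂)
    (h₁ : ∀ n, z₁ + symSeq x n ∈ l₁ • C) (h₂ : ∀ n, z₂ + symSeq y n ∈ l₂ • C) :
    ∀ n, (z₁ + z₂) + symSeq (x + y) n ∈ (l₁ + l₂) • C := by
  intro n
  have := mem_smul_add hconv hl₁ hl₂ (h₁ n) (h₂ n)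
  rw [symSeq_add]
  convert this using 1
  abel

lemma witness_neg {C : Set X} {x : ℕ → X} {z : X} {l : ℝ}
    (h : ∀ n, z + symSeq x n ∈ l • C) :
    ∀ n, z + symSeq (-x) n ∈ l • C := by
  intro n
  rcases Nat.even_or_odd n with ⟨m, hm⟩ | ⟨m, hm⟩
  · have : symSeq (-x) n = symSeq x (2*m+1) := by
      subst hm
      rw [show m + m = 2*m by ring, symSeq_two_mul, symSeq_two_mul_add_one, Pi.neg_apply]
    rw [this]; exact h _
  · have : symSeq (-x) n = symSeq x (2*m) := by
      subst hm
      rw [symSeq_two_mul_add_one, symSeq_two_mul, Pi.neg_apply, neg_neg]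
    rw [this]; exact h _

lemma CFit_sub {C : Set X} (hconv : Convex ℝ C) {x y : ℕ → X}
    (hx : CFit C x) (hy : CFit C y) : CFit C (x - y) := by
  obtain ⟨hx0, z₁, l₁, hl₁, h₁⟩ := hx
  obtain ⟨hy0, z₂, l₂, hl₂, h₂⟩ := hy
  refine ⟨by have h0 := hx0.sub hy0; rw [sub_zero] at h0; exact h0, z₁ + z₂, l₁ + l₂, by linarith, ?_⟩
  have := witness_add hconv hl₁.le hl₂.le h₁ (witness_neg h₂)
  simpa [sub_eq_add_neg] using this

lemma norm_le_of_witness {C : Set X} {M : ℝ} (hM : ∀ c ∈ C, ‖c‖ ≤ M)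
    {x : ℕ → X} {z : X} {l : ℝ} (hl : 0 ≤ l) (h : ∀ n, z + symSeq x n ∈ l • C) (n : ℕ) :
    ‖x n‖ ≤ l * M := by
  obtain ⟨c₁, hc₁, e₁⟩ := h (2*n)
  obtain ⟨c₂, hc₂, e₂⟩ := h (2*n+1)
  rw [symSeq_two_mul] at e₁
  rw [symSeq_two_mul_add_one] at e₂
  have e₁' : l • c₁ = z + x n := e₁
  have e₂' : l • c₂ = z + -x n := e₂
  have key : x n + x n = l • c₁ - l • c₂ := by
    rw [e₁', e₂']; abel
  have h2 : (2:ℝ) * ‖x n‖ = ‖x n + x n‖ := by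
    rw [← two_smul ℝ (x n), norm_smul]; simp
  have : ‖x n + x n‖ ≤ l * M + l * M := by
    rw [key]
    calc ‖l • c₁ - l • c₂‖ ≤ ‖l • c₁‖ + ‖l • c₂‖ := norm_sub_le _ _
    _ ≤ l * M + l * M := by
        rw [norm_smul, norm_smul, Real.norm_of_nonneg hl]
        gcongr
        exacts [hM c₁ hc₁, hM c₂ hc₂]
  linarith [h2 ▸ this]

end helpers
section part2
variable {X : Type*} [NormedAddCommGroup X] [NormedSpace ℝ X]

lemma sum_mem_smul {C : Set X} (hconv : Convex ℝ C) (hne : C.Nonempty)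
    {w : ℕ → X} {l : ℕ → ℝ} (hl : ∀ j, 0 ≤ l j) (hw : ∀ j, w j ∈ l j • C) (N : ℕ) :
    (∑ j ∈ Finset.range N, w j) ∈ (∑ j ∈ Finset.range N, l j) • C := by
  induction N with
  | zero => simp [Set.zero_smul_set hne]
  | succ N ih =>
      rw [Finset.sum_range_succ, Finset.sum_range_succ]
      exact mem_smul_add hconv (Finset.sum_nonneg fun i _ => hl i) (hl N) ih (hw N)

lemma tsum_mem_smul {C : Set X} (hC : IsClosed C) (hconv : Convex ℝ C) (hne : C.Nonempty)
    {w : ℕ → X} {l : ℕ → ℝ} (hl : ∀ j, 0 ≤ l j) (hw : ∀ j, w j ∈ l j • C)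
    (hls : Summable l) (hws : Summable w) (hL : (∑' j, l j) ≠ 0) :
    (∑' j, w j) ∈ (∑' j, l j) • C := by
  obtain ⟨c₀, hc₀⟩ := hne
  set L := ∑' j, l j with hLdef
  rw [Set.mem_smul_set_iff_inv_smul_mem₀ hL]
  have key : ∀ N, L⁻¹ • ((∑ j ∈ Finset.range N, w j) + (L - ∑ j ∈ Finset.range N, l j) • c₀) ∈ C := by
    intro N
    have hrem : 0 ≤ L - ∑ j ∈ Finset.range N, l j :=
      sub_nonneg.2 (Summable.sum_le_tsum _ (fun i _ => hl i) hls)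
    have hmem : (∑ j ∈ Finset.range N, w j) + (L - ∑ j ∈ Finset.range N, l j) • c₀ ∈
        ((∑ j ∈ Finset.range N, l j) + (L - ∑ j ∈ Finset.range N, l j)) • C :=
      mem_smul_add hconv (Finset.sum_nonneg fun i _ => hl i) hrem
        (sum_mem_smul hconv ⟨c₀, hc₀⟩ hl hw N) (Set.smul_mem_smul_set hc₀)
    have heq : (∑ j ∈ Finset.range N, l j) + (L - ∑ j ∈ Finset.range N, l j) = L := by ring
    rw [heq, Set.mem_smul_set_iff_inv_smul_mem₀ hL] at hmem
    exact hmem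
  have h1 : Tendsto (fun N => ∑ j ∈ Finset.range N, w j) atTop (𝓝 (∑' j, w j)) :=
    hws.hasSum.tendsto_sum_nat
  have h2 : Tendsto (fun N => (L - ∑ j ∈ Finset.range N, l j)) atTop (𝓝 0) := by
    have := hls.hasSum.tendsto_sum_nat
    have := tendsto_const_nhds (x := L) (f := atTop (α := ℕ)) |>.sub this
    simpa [hLdef] using this
  have hlim : Tendsto (fun N => L⁻¹ • ((∑ j ∈ Finset.range N, w j) + (L - ∑ j ∈ Finset.range N, l j) • c₀))
      atTop (𝓝 (L⁻¹ • (∑' j, w j))) := by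
    have : Tendsto (fun N => (∑ j ∈ Finset.range N, w j) + (L - ∑ j ∈ Finset.range N, l j) • c₀)
        atTop (𝓝 ((∑' j, w j) + (0:ℝ) • c₀)) := h1.add (h2.smul_const c₀)
    simpa using this.const_smul L⁻¹
  exact hC.mem_of_tendsto hlim (Filter.Eventually.of_forall key)

lemma symSeq_tsum {v : ℕ → ℕ → X} (hsum : ∀ m, Summable fun j => v j m) (n : ℕ) :
    symSeq (fun m => ∑' j, v j m) n = ∑' j, symSeq (v j) n := by
  unfold symSeq
  split
  · rfl
  · rw [← tsum_neg]

lemma phiC_le {C : Set X} {x : ℕ → X} {z : X} {l : ℝ} (hl : 0 < l)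
    (h : ∀ n, z + symSeq x n ∈ l • C) : phiC C x ≤ ‖z‖ + l := by
  apply csInf_le
  · exact ⟨0, fun c ⟨z', l', hl', _, hc⟩ => by rw [hc]; positivity⟩
  · exact ⟨z, l, hl, h, rfl⟩

lemma phiC_nonneg {C : Set X} {x : ℕ → X} : 0 ≤ phiC C x :=
  Real.sInf_nonneg fun c ⟨z', l', hl', _, hc⟩ => by rw [hc]; positivity

lemma exists_witness_lt {C : Set X} {x : ℕ → X} {ε : ℝ}
    (hx : ∃ (z : X) (l : ℝ), 0 < l ∧ ∀ n, z + symSeq x n ∈ l • C)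
    (h : phiC C x < ε) :
    ∃ (z : X) (l : ℝ), 0 < l ∧ (∀ n, z + symSeq x n ∈ l • C) ∧ ‖z‖ + l < ε := by
  obtain ⟨z, l, hl, hw⟩ := hx
  have hne : {c : ℝ | ∃ (z : X) (l : ℝ), 0 < l ∧ (∀ n, z + symSeq x n ∈ l • C) ∧ c = ‖z‖ + l}.Nonempty :=
    ⟨‖z‖ + l, z, l, hl, hw, rfl⟩
  obtain ⟨c, ⟨z', l', hl', hw', rfl⟩, hclt⟩ := exists_lt_of_csInf_lt hne h
  exact ⟨z', l', hl', hw', hclt⟩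

end part2

/-- `(F_C(X), φ_C)` is complete: every sequence of `C`-fit sequences
which is Cauchy for `φ_C` converges in `φ_C` to a `C`-fit sequence. -/
theorem statement7 {X : Type*} [NormedAddCommGroup X] [NormedSpace ℝ X] [CompleteSpace X]
    (C : Set X) (hC : IsClosed C) (hconv : Convex ℝ C) (hbdd : Bornology.IsBounded C)
    (u : ℕ → ℕ → X) (hu : ∀ k, CFit C (u k))
    (hcauchy : ∀ ε : ℝ, 0 < ε → ∃ N : ℕ, ∀ m ≥ N, ∀ n ≥ N, phiC C (u m - u n) < ε) :
    ∃ x : ℕ → X, CFit C x ∧ Tendsto (fun k => phiC C (u k - x)) atTop (𝓝 (0 : ℝ)) := by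
  classical
  obtain ⟨M, hMpos, hM⟩ := hbdd.exists_pos_norm_le
  have hCne : C.Nonempty := by
    obtain ⟨-, z0, l0, hl0, hw0⟩ := hu 0
    obtain ⟨c, hc, -⟩ := hw0 0
    exact ⟨c, hc⟩
  -- Cauchy structure
  choose N hN using fun j : ℕ => hcauchy ((1/2:ℝ)^j) (by positivity)
  -- subsequence indices
  let k : ℕ → ℕ := fun j => Nat.rec (N 0) (fun i ki => max (ki+1) (N (i+1))) j
  have hk_succ : ∀ j, k j < k (j+1) := fun j => lt_of_lt_of_le (Nat.lt_succ_self _) (le_max_left _ _)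
  have hk_ge : ∀ j, N j ≤ k j := by
    intro j
    cases j with
    | zero => exact le_refl _
    | succ i => exact le_max_right _ _
  have hfar : ∀ j, ∀ K ≥ N j, phiC C (u K - u (k j)) < (1/2:ℝ)^j :=
    fun j K hK => hN j K hK (k j) (hk_ge j)
  have hdiff : ∀ j, phiC C (u (k (j+1)) - u (k j)) < (1/2:ℝ)^j :=
    fun j => hfar j (k (j+1)) (le_trans (hk_ge j) (hk_succ j).le)
  -- witnesses for consecutive differences
  have hv : ∀ j, ∃ (z : X) (l : ℝ), 0 < l ∧
      (∀ n, z + symSeq (u (k (j+1)) - u (k j)) n ∈ l • C) ∧ ‖z‖ + l < (1/2:ℝ)^j :=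
    fun j => exists_witness_lt (CFit_sub hconv (hu _) (hu _)).2 (hdiff j)
  choose z l hl hw hcost using hv
  set v : ℕ → ℕ → X := fun j => u (k (j+1)) - u (k j) with hvdef
  -- summability
  have hgeo : Summable (fun j : ℕ => (1/2:ℝ)^j) :=
    summable_geometric_of_lt_one (by norm_num) (by norm_num)
  have hzl_sum : Summable (fun j => ‖z j‖ + l j) :=
    Summable.of_nonneg_of_le (fun j => add_nonneg (norm_nonneg _) (hl j).le)
      (fun j => (hcost j).le) hgeo
  have hz_norm_sum : Summable (fun j => ‖z j‖) :=
    Summable.of_nonneg_of_le (fun j => norm_nonneg _)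
      (fun j => le_add_of_nonneg_right (hl j).le) hzl_sum
  have hl_sum : Summable l :=
    Summable.of_nonneg_of_le (fun j => (hl j).le)
      (fun j => le_add_of_nonneg_left (norm_nonneg _)) hzl_sum
  have hz_sum : Summable z := hz_norm_sum.of_norm
  have hvn : ∀ j n, ‖v j n‖ ≤ l j * M := fun j n => norm_le_of_witness hM (hl j).le (hw j) n
  have hv_sum : ∀ n, Summable fun j => v j n := fun n =>
    Summable.of_norm_bounded (hl_sum.mul_right M) (fun j => hvn j n)
  -- tail summability
  have hlt_sum : ∀ m, Summable fun j => l (j+m) := fun m => (summable_nat_add_iff m).2 hl_sum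
  have hzt_sum : ∀ m, Summable fun j => z (j+m) := fun m => (summable_nat_add_iff m).2 hz_sum
  have hznt_sum : ∀ m, Summable fun j => ‖z (j+m)‖ := fun m => (summable_nat_add_iff m).2 hz_norm_sum
  have hvt_sum : ∀ m n, Summable fun j => v (j+m) n := fun m n =>
    (summable_nat_add_iff m).2 (hv_sum n)
  have hLpos : ∀ m, 0 < (∑' j, l (j+m)) := fun m =>
    Summable.tsum_pos (hlt_sum m) (fun i => (hl _).le) 0 (hl (0+m))
  -- tail witnesses
  have hWt : ∀ m n, (∑' j, z (j+m)) + symSeq (fun n' => ∑' j, v (j+m) n') n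
      ∈ (∑' j, l (j+m)) • C := by
    intro m n
    have hsymsum : ∀ n', Summable fun j => symSeq (v (j+m)) n' := by
      intro n'
      unfold symSeq
      split
      · exact hvt_sum m _
      · exact (hvt_sum m _).neg
    have he : symSeq (fun n' => ∑' j, v (j+m) n') n = ∑' j, symSeq (v (j+m)) n :=
      symSeq_tsum (fun n' => hvt_sum m n') n
    rw [he, ← Summable.tsum_add (hzt_sum m) (hsymsum n)]
    exact tsum_mem_smul hC hconv hCne (fun j => (hl _).le) (fun j => hw (j+m) n)
      (hlt_sum m) ((hzt_sum m).add (hsymsum n)) (hLpos m).ne'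
  -- tail cost bound
  have hcostt : ∀ m, ‖∑' j, z (j+m)‖ + (∑' j, l (j+m)) ≤ 2 * (1/2:ℝ)^m := by
    intro m
    have h1 : ‖∑' j, z (j+m)‖ ≤ ∑' j, ‖z (j+m)‖ := norm_tsum_le_tsum_norm (hznt_sum m)
    have h2 : (∑' j, ‖z (j+m)‖) + (∑' j, l (j+m)) = ∑' j, (‖z (j+m)‖ + l (j+m)) :=
      (Summable.tsum_add (hznt_sum m) (hlt_sum m)).symm
    have h3 : (∑' j, (‖z (j+m)‖ + l (j+m))) ≤ ∑' j : ℕ, (1/2:ℝ)^(j+m) :=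
      Summable.tsum_le_tsum (fun j => (hcost (j+m)).le)
        ((summable_nat_add_iff m).2 hzl_sum) ((summable_nat_add_iff m).2 hgeo)
    have h4 : (∑' j : ℕ, (1/2:ℝ)^(j+m)) = 2 * (1/2:ℝ)^m := by
      have he : ∀ j : ℕ, (1/2:ℝ)^(j+m) = (1/2:ℝ)^j * (1/2:ℝ)^m := fun j => pow_add _ _ _
      rw [tsum_congr he, tsum_mul_right, tsum_geometric_of_lt_one (by norm_num) (by norm_num)]
      norm_num [mul_comm]
    linarith
  -- the limit sequence
  set x : ℕ → X := fun n => u (k 0) n + ∑' j, v j n with hxdef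
  have hxu : ∀ m, x - u (k m) = fun n => ∑' j, v (j+m) n := by
    intro m
    funext n
    have htel : ∑ j ∈ Finset.range m, v j n = u (k m) n - u (k 0) n := by
      have := Finset.sum_range_sub (fun j => u (k j) n) m
      simpa [hvdef] using this
    have hsplit : ∑ j ∈ Finset.range m, v j n + ∑' j, v (j+m) n = ∑' j, v j n :=
      Summable.sum_add_tsum_nat_add m (hv_sum n)
    have hs : (∑' j, v j n) = (u (k m) n - u (k 0) n) + ∑' j, v (j+m) n := by
      rw [← hsplit, htel]
    simp only [Pi.sub_apply, hxdef]
    rw [hs]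
    abel
  have humx : ∀ m, u (k m) - x = -(fun n => ∑' j, v (j+m) n) := by
    intro m; rw [← hxu m, neg_sub]
  have hnegw : ∀ m, ∀ n, (∑' j, z (j+m)) + symSeq (u (k m) - x) n ∈ (∑' j, l (j+m)) • C := by
    intro m
    rw [humx m]
    exact witness_neg (hWt m)
  -- x is null
  have hVt_bound : ∀ m n, ‖∑' j, v (j+m) n‖ ≤ (∑' j, l (j+m)) * M := fun m n =>
    norm_le_of_witness hM (hLpos m).le (hWt m) n
  have hx_null : Tendsto x atTop (𝓝 (0:X)) := by
    rw [NormedAddCommGroup.tendsto_nhds_zero]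
    intro ε hε
    obtain ⟨m, hm⟩ := exists_pow_lt_of_lt_one (show (0:ℝ) < ε/(4*M) by positivity)
      (show (1/2:ℝ) < 1 by norm_num)
    have hLm : (∑' j, l (j+m)) * M < ε/2 := by
      have h1 : (∑' j, l (j+m)) ≤ 2 * (1/2:ℝ)^m := by
        have h5 := hcostt m; have h6 := norm_nonneg (∑' j, z (j+m)); linarith
      calc (∑' j, l (j+m)) * M ≤ 2 * (1/2:ℝ)^m * M :=
            mul_le_mul_of_nonneg_right h1 hMpos.le
        _ < 2 * (ε/(4*M)) * M := by
            apply mul_lt_mul_of_pos_right _ hMpos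
            linarith
        _ = ε/2 := by field_simp; ring
    have hnull : Tendsto (u (k m)) atTop (𝓝 (0:X)) := (hu (k m)).1
    rw [NormedAddCommGroup.tendsto_nhds_zero] at hnull
    filter_upwards [hnull (ε/2) (by linarith)] with n hn
    have hxv : x n - u (k m) n = ∑' j, v (j+m) n := by
      have := congrFun (hxu m) n
      simpa using this
    calc ‖x n‖ = ‖(x n - u (k m) n) + u (k m) n‖ := by rw [sub_add_cancel]
      _ ≤ ‖x n - u (k m) n‖ + ‖u (k m) n‖ := norm_add_le _ _
      _ < ε/2 + ε/2 := by
          apply add_lt_add_of_le_of_lt _ hn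
          rw [hxv]; exact le_trans (hVt_bound m n) hLm.le
      _ = ε := by ring
  -- x is C-fit
  have hxfit : CFit C x := by
    obtain ⟨-, z0, l0, hl0, hw0⟩ := hu (k 0)
    refine ⟨hx_null, z0 + ∑' j, z (j+0), l0 + ∑' j, l (j+0), by have := hLpos 0; linarith, ?_⟩
    have hxadd : x = u (k 0) + (fun n => ∑' j, v (j+0) n) := by
      funext n
      simp only [hxdef, Pi.add_apply]
      congr 1
    rw [hxadd]
    exact witness_add hconv hl0.le (hLpos 0).le hw0 (hWt 0)
  refine ⟨x, hxfit, ?_⟩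
  -- convergence in phiC
  rw [Metric.tendsto_atTop]
  intro ε hε
  obtain ⟨m, hm⟩ := exists_pow_lt_of_lt_one (show (0:ℝ) < ε/4 by linarith)
    (show (1/2:ℝ) < 1 by norm_num)
  refine ⟨N m, fun K hK => ?_⟩
  obtain ⟨zc, lc, hlc, hwc, hcc⟩ :=
    exists_witness_lt (CFit_sub hconv (hu K) (hu (k m))).2 (hfar m K hK)
  have hcomb := witness_add hconv hlc.le (hLpos m).le hwc (hnegw m)
  rw [sub_add_sub_cancel] at hcomb
  have hb : phiC C (u K - x) ≤ ‖zc + ∑' j, z (j+m)‖ + (lc + ∑' j, l (j+m)) :=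
    phiC_le (by have := hLpos m; linarith) hcomb
  have hb2 : ‖zc + ∑' j, z (j+m)‖ + (lc + ∑' j, l (j+m))
      ≤ (‖zc‖ + lc) + (‖∑' j, z (j+m)‖ + ∑' j, l (j+m)) := by
    have := norm_add_le zc (∑' j, z (j+m)); linarith
  have hfin : phiC C (u K - x) < ε := by
    calc phiC C (u K - x) ≤ (‖zc‖ + lc) + (‖∑' j, z (j+m)‖ + ∑' j, l (j+m)) := le_trans hb hb2
      _ < ε/4 + 2 * (ε/4) := by
          apply add_lt_add_of_lt_of_le (lt_trans hcc hm)
          calc ‖∑' j, z (j+m)‖ + (∑' j, l (j+m)) ≤ 2 * (1/2:ℝ)^m := hcostt m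
            _ ≤ 2 * (ε/4) := by linarith
      _ < ε := by linarith
  rw [Real.dist_eq, sub_zero, abs_of_nonneg phiC_nonneg]
  exact hfin
end

section
/- Let X be a separable Banach space that is a dual space with separable predual (so B_X is weak* compact and weak* metrizable), and let C ⊆ X be weak*-closed, convex, and compactivorous. Then C has nonempty interior in the norm topology. -/
open TopologicalSpace Metric Filter Topology Set

set_option synthInstance.maxHeartbeats 1000000
set_option maxHeartbeats 1000000

/-- in a separable dual Banach space `X = Z*` with separable predual,
every weak*-closed, convex, compactivorous set has nonempty norm-interior. -/
theorem statement14 {Z : Type*} [NormedAddCommGroup Z] [NormedSpace ℝ Z] [CompleteSpace Z]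
    [TopologicalSpace.SeparableSpace Z]
    [TopologicalSpace.SeparableSpace (StrongDual ℝ Z)]
    (C : Set (StrongDual ℝ Z))
    (hwstar : IsClosed ((fun f => StrongDual.toWeakDual f) '' C : Set (WeakDual ℝ Z)))
    (hconv : Convex ℝ C) (hcomp : Compactivorous C) :
    (interior C).Nonempty := by
  classical
  set C' : Set (WeakDual ℝ Z) := (fun f => StrongDual.toWeakDual f) '' C with hC'def
  have hinj : Function.Injective (fun f : StrongDual ℝ Z => StrongDual.toWeakDual f) :=
    StrongDual.toWeakDual.injective
  have hmemC' : ∀ x : StrongDual ℝ Z, StrongDual.toWeakDual x ∈ C' ↔ x ∈ C := fun x =>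
    hinj.mem_set_image
  -- a base point of C
  obtain ⟨c₀, δ0, hδ0, hsub0⟩ := hcomp {0} isCompact_singleton
  have hc₀C : c₀ ∈ C := by
    simpa using hsub0 ⟨0, rfl, rfl⟩
  set R : ℝ := ‖c₀‖ + 1 with hRdef
  have hc₀R : ‖c₀‖ ≤ R := by simp [hRdef]
  -- the shrinking lemma from convexity
  have shrink : ∀ (S : Set (StrongDual ℝ Z)) (z : StrongDual ℝ Z) (δ : ℝ), (∀ k ∈ S, z + δ • k ∈ C) →
      ∀ t : ℝ, 0 < t → t ≤ 1 → ∀ k ∈ S, ((1 - t) • c₀ + t • z) + (t * δ) • k ∈ C := by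
    intro S z δ h t ht ht1 k hk
    have h2 : (1 - t) • c₀ + t • (z + δ • k) ∈ C :=
      hconv hc₀C (h k hk) (by linarith) ht.le (by ring)
    convert h2 using 1
    module
  -- convex-combination norm bound
  have normcomb : ∀ (x y : StrongDual ℝ Z) (t : ℝ), 0 ≤ t → t ≤ 1 → ‖x‖ ≤ R → ‖y‖ ≤ R →
      ‖(1 - t) • x + t • y‖ ≤ R := by
    intro x y t ht ht1 hx hy
    calc ‖(1 - t) • x + t • y‖ ≤ ‖(1 - t) • x‖ + ‖t • y‖ := norm_add_le _ _
      _ = (1 - t) * ‖x‖ + t * ‖y‖ := by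
          rw [norm_smul, norm_smul, Real.norm_eq_abs, Real.norm_eq_abs,
            abs_of_nonneg (by linarith), abs_of_nonneg ht]
      _ ≤ (1 - t) * R + t * R := by
          gcongr
      _ = R := by ring
  -- the sets for the Baire argument
  set F : ℕ → Set (NonemptyCompacts (StrongDual ℝ Z)) := fun m =>
    {K | ∃ z : StrongDual ℝ Z, ‖z‖ ≤ R ∧ ∀ k ∈ (K : Set (StrongDual ℝ Z)), z + (1 / ((m : ℝ) + 1)) • k ∈ C} with hFdef
  -- every nonempty compact is in some F m
  have hcover : ∀ K : NonemptyCompacts (StrongDual ℝ Z), ∃ m, K ∈ F m := by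
    intro K
    obtain ⟨z, δ, hδ, hsub⟩ := hcomp ((K : Set (StrongDual ℝ Z)) ∪ {0})
      (K.isCompact.union isCompact_singleton)
    have hz : ∀ k ∈ (K : Set (StrongDual ℝ Z)) ∪ {0}, z + δ • k ∈ C := fun k hk =>
      hsub ⟨k, hk, rfl⟩
    have hden : (0:ℝ) < ‖z‖ + ‖c₀‖ + 1 := by positivity
    set t₀ : ℝ := 1 / (‖z‖ + ‖c₀‖ + 1) with ht₀def
    have ht₀ : 0 < t₀ := by positivity
    have ht₀1 : t₀ ≤ 1 := by
      rw [ht₀def, div_le_one hden]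
      nlinarith [norm_nonneg z, norm_nonneg c₀]
    set z₁ : StrongDual ℝ Z := (1 - t₀) • c₀ + t₀ • z with hz₁def
    set δ₁ : ℝ := t₀ * δ with hδ₁def
    have hδ₁ : 0 < δ₁ := mul_pos ht₀ hδ
    have h₁ : ∀ k ∈ (K : Set (StrongDual ℝ Z)) ∪ {0}, z₁ + δ₁ • k ∈ C := shrink _ z δ hz t₀ ht₀ ht₀1
    have hz₁R : ‖z₁‖ ≤ R := by
      have hnz : t₀ * ‖z‖ ≤ 1 := by
        rw [ht₀def, one_div, inv_mul_le_iff₀ hden]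
        nlinarith [norm_nonneg c₀]
      calc ‖z₁‖ ≤ ‖(1 - t₀) • c₀‖ + ‖t₀ • z‖ := norm_add_le _ _
        _ = (1 - t₀) * ‖c₀‖ + t₀ * ‖z‖ := by
            rw [norm_smul, norm_smul, Real.norm_eq_abs, Real.norm_eq_abs,
              abs_of_nonneg (by linarith), abs_of_nonneg ht₀.le]
        _ ≤ ‖c₀‖ + 1 := by nlinarith [norm_nonneg c₀]
        _ = R := hRdef.symm
    obtain ⟨m, hm⟩ := exists_nat_one_div_lt hδ₁
    set t₁ : ℝ := (1 / ((m : ℝ) + 1)) / δ₁ with ht₁def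
    have hmpos : (0:ℝ) < 1 / ((m : ℝ) + 1) := by positivity
    have ht₁ : 0 < t₁ := div_pos hmpos hδ₁
    have ht₁1 : t₁ ≤ 1 := by
      rw [ht₁def, div_le_one hδ₁]; exact hm.le
    have h₂ := shrink _ z₁ δ₁ h₁ t₁ ht₁ ht₁1
    have ht₁δ₁ : t₁ * δ₁ = 1 / ((m : ℝ) + 1) := div_mul_cancel₀ _ hδ₁.ne'
    refine ⟨m, (1 - t₁) • c₀ + t₁ • z₁, normcomb _ _ _ ht₁.le ht₁1 hc₀R hz₁R, ?_⟩
    intro k hk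
    have := h₂ k (Or.inl hk)
    rwa [ht₁δ₁] at this
  -- each F m is closed
  have hFclosed : ∀ m, IsClosed (F m) := by
    intro m
    set c : ℝ := 1 / ((m : ℝ) + 1) with hcdef
    apply IsSeqClosed.isClosed
    intro Kn K hKn hlim
    choose z hzR hzC using hKn
    set V : Ultrafilter ℕ := Ultrafilter.of Filter.atTop with hVdef
    have hV : (V : Filter ℕ) ≤ Filter.atTop := Ultrafilter.of_le _
    set s' : Set (WeakDual ℝ Z) := WeakDual.toStrongDual ⁻¹' Metric.closedBall 0 R with hs'def
    have hs'compact : IsCompact s' := WeakDual.isCompact_closedBall 0 R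
    set w : ℕ → WeakDual ℝ Z := fun j => StrongDual.toWeakDual (z j) with hwdef
    have hws : ∀ j, w j ∈ s' := by
      intro j
      simp only [hs'def, Set.mem_preimage, Metric.mem_closedBall, dist_zero_right]
      exact hzR j
    obtain ⟨a, ha, hle⟩ := hs'compact.ultrafilter_le_nhds (V.map w)
      (by
        rw [Ultrafilter.coe_map, Filter.le_principal_iff, Filter.mem_map]
        exact Filter.univ_mem' hws)
    have htend_w : Filter.Tendsto w (V : Filter ℕ) (𝓝 a) := by
      rwa [Ultrafilter.coe_map] at hle
    set zI : StrongDual ℝ Z := WeakDual.toStrongDual a with hzIdef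
    have haz : StrongDual.toWeakDual zI = a := rfl
    have hzIR : ‖zI‖ ≤ R := by
      have := ha
      simpa [hs'def, dist_zero_right] using this
    refine ⟨zI, hzIR, ?_⟩
    intro k hk
    choose kj hkjmem hkjdist using fun j =>
      (Kn j).isCompact.exists_infDist_eq_dist (Kn j).nonempty k
    have hbound : ∀ j, dist k (kj j) ≤ dist K (Kn j) := by
      intro j
      rw [← hkjdist j, NonemptyCompacts.dist_eq]
      exact Metric.infDist_le_hausdorffDist_of_mem hk
        (Metric.hausdorffEdist_ne_top_of_nonempty_of_bounded K.nonempty (Kn j).nonempty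
          K.isCompact.isBounded (Kn j).isCompact.isBounded)
    have hdistlim : Filter.Tendsto (fun j => dist K (Kn j)) Filter.atTop (𝓝 0) := by
      have h0 : Filter.Tendsto (fun j => dist (Kn j) K) Filter.atTop (𝓝 0) :=
        tendsto_iff_dist_tendsto_zero.mp hlim
      simpa [dist_comm] using h0
    have hkjlim : Filter.Tendsto kj Filter.atTop (𝓝 k) := by
      rw [tendsto_iff_dist_tendsto_zero]
      refine squeeze_zero (fun j => dist_nonneg) (fun j => ?_) hdistlim
      rw [dist_comm]; exact hbound j
    have htend : Filter.Tendsto (fun j => w j + c • StrongDual.toWeakDual (kj j))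
        (V : Filter ℕ) (𝓝 (a + c • StrongDual.toWeakDual k)) := by
      refine htend_w.add ?_
      exact (((NormedSpace.Dual.toWeakDual_continuous.tendsto k).comp hkjlim).mono_left
        hV).const_smul c
    have hmem : ∀ j, w j + c • StrongDual.toWeakDual (kj j) ∈ C' := by
      intro j
      have h1 : z j + c • kj j ∈ C := hzC j (kj j) (hkjmem j)
      have : StrongDual.toWeakDual (z j + c • kj j) ∈ C' := (hmemC' _).mpr h1
      simpa [map_add, map_smul] using this
    have hlimC : a + c • StrongDual.toWeakDual k ∈ C' :=
      hwstar.mem_of_tendsto htend (Filter.Eventually.of_forall hmem)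
    have : StrongDual.toWeakDual (zI + c • k) ∈ C' := by
      rw [map_add, map_smul, haz]; exact hlimC
    exact (hmemC' _).mp this
  -- Baire category
  haveI : Nonempty (NonemptyCompacts (StrongDual ℝ Z)) :=
    ⟨⟨⟨{0}, isCompact_singleton⟩, Set.singleton_nonempty 0⟩⟩
  have hunion : (⋃ m, F m) = Set.univ :=
    Set.iUnion_eq_univ_iff.mpr fun K => hcover K
  haveI : BaireSpace (NonemptyCompacts (StrongDual ℝ Z)) := by
    have h1 : (uniformity (NonemptyCompacts (StrongDual ℝ Z))).IsCountablyGenerated :=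
      @EMetric.instIsCountablyGeneratedUniformity (NonemptyCompacts (StrongDual ℝ Z)) _
    have h2 : CompleteSpace (NonemptyCompacts (StrongDual ℝ Z)) := inferInstance
    have : IsCompletelyPseudoMetrizableSpace (NonemptyCompacts (StrongDual ℝ Z)) :=
      @IsCompletelyPseudoMetrizableSpace.of_completeSpace_pseudometrizable _ _ h2 h1
    exact BaireSpace.of_completelyPseudoMetrizable
  obtain ⟨m, hm⟩ := nonempty_interior_of_iUnion_of_closed hFclosed hunion
  obtain ⟨K₀, hK₀⟩ := hm
  obtain ⟨ε, hε, hball⟩ := (Metric.mem_nhds_iff (x := K₀) (s := F m)).mp (mem_interior_iff_mem_nhds.mp hK₀)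
  obtain ⟨k₀, hk₀⟩ := K₀.nonempty
  set c : ℝ := 1 / ((m : ℝ) + 1) with hcdef
  have hc : 0 < c := by positivity
  set s' : Set (WeakDual ℝ Z) := WeakDual.toStrongDual ⁻¹' Metric.closedBall 0 R with hs'def
  have hs'compact : IsCompact s' := WeakDual.isCompact_closedBall 0 R
  set t : ↥(Metric.closedBall k₀ (ε/2)) → Set (WeakDual ℝ Z) := fun f =>
    (fun w => w + c • StrongDual.toWeakDual (f : StrongDual ℝ Z)) ⁻¹' C' with htdef
  have htclosed : ∀ f, IsClosed (t f) := fun f =>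
    hwstar.preimage (continuous_add_right _)
  have hFIP : ∀ u : Finset ↥(Metric.closedBall k₀ (ε/2)), (s' ∩ ⋂ i ∈ u, t i).Nonempty := by
    intro u
    set Fset : Set (StrongDual ℝ Z) := (fun i : ↥(Metric.closedBall k₀ (ε/2)) => (i : StrongDual ℝ Z)) '' ↑u with hFsetdef
    have hFfin : Fset.Finite := (u.finite_toSet.image _)
    set Kset : Set (StrongDual ℝ Z) := (K₀ : Set (StrongDual ℝ Z)) ∪ Fset with hKsetdef
    have hKc : IsCompact Kset := K₀.isCompact.union hFfin.isCompact
    set Knc : NonemptyCompacts (StrongDual ℝ Z) := ⟨⟨Kset, hKc⟩, ⟨k₀, Or.inl hk₀⟩⟩ with hKncdef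
    have hKcoe : (Knc : Set (StrongDual ℝ Z)) = Kset := rfl
    have hdist : dist Knc K₀ < ε := by
      rw [NonemptyCompacts.dist_eq]
      have hle : Metric.hausdorffDist Kset (K₀ : Set (StrongDual ℝ Z)) ≤ ε / 2 := by
        apply Metric.hausdorffDist_le_of_mem_dist (by linarith)
        · rintro x (hx | hx)
          · exact ⟨x, hx, by simp; positivity⟩
          · obtain ⟨i, _, rfl⟩ := hx
            exact ⟨k₀, hk₀, i.2⟩
        · intro y hy
          exact ⟨y, Or.inl hy, by simp; positivity⟩
      calc Metric.hausdorffDist (Knc : Set (StrongDual ℝ Z)) (K₀ : Set (StrongDual ℝ Z)) ≤ ε / 2 := hle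
        _ < ε := by linarith
    have hKF : Knc ∈ F m := hball (Metric.mem_ball.mpr hdist)
    obtain ⟨z, hzR, hzC⟩ := hKF
    refine ⟨StrongDual.toWeakDual z, ?_, ?_⟩
    · simp only [hs'def, Set.mem_preimage, Metric.mem_closedBall, dist_zero_right]
      exact hzR
    · rw [Set.mem_iInter₂]
      intro i hi
      have hik : (i : StrongDual ℝ Z) ∈ (Knc : Set (StrongDual ℝ Z)) := Or.inr ⟨i, hi, rfl⟩
      have h1 : z + c • (i : StrongDual ℝ Z) ∈ C := hzC _ hik
      simp only [htdef, Set.mem_preimage]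
      have : StrongDual.toWeakDual (z + c • (i : StrongDual ℝ Z)) ∈ C' := (hmemC' _).mpr h1
      simpa [map_add, map_smul] using this
  obtain ⟨w, hws', hwt⟩ := hs'compact.inter_iInter_nonempty t htclosed hFIP
  set z : StrongDual ℝ Z := WeakDual.toStrongDual w with hzdef
  have hwz : StrongDual.toWeakDual z = w := rfl
  -- the ball
  have hballsub : Metric.ball (z + c • k₀) (c * (ε/2)) ⊆ C := by
    intro y hy
    set f : StrongDual ℝ Z := k₀ + c⁻¹ • (y - (z + c • k₀)) with hfdef
    have hfmem : f ∈ Metric.closedBall k₀ (ε/2) := by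
      rw [Metric.mem_closedBall, dist_eq_norm]
      have : f - k₀ = c⁻¹ • (y - (z + c • k₀)) := by rw [hfdef]; abel
      rw [this, norm_smul, Real.norm_eq_abs, abs_of_nonneg (inv_nonneg.mpr hc.le)]
      have hy' : ‖y - (z + c • k₀)‖ < c * (ε/2) := by
        rw [← dist_eq_norm]; exact Metric.mem_ball.mp hy
      calc c⁻¹ * ‖y - (z + c • k₀)‖ ≤ c⁻¹ * (c * (ε/2)) := by
            gcongr
        _ = ε / 2 := by field_simp
    have hwtf : w ∈ t ⟨f, hfmem⟩ := Set.mem_iInter.mp hwt ⟨f, hfmem⟩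
    have h1 : StrongDual.toWeakDual (z + c • f) ∈ C' := by
      simpa [htdef, Set.mem_preimage, map_add, map_smul, hwz] using hwtf
    have h2 : z + c • f = y := by
      rw [hfdef, smul_add, smul_inv_smul₀ hc.ne']
      abel
    rw [h2] at h1
    exact (hmemC' _).mp h1
  refine ⟨z + c • k₀, ?_⟩
  rw [mem_interior_iff_mem_nhds]
  exact Filter.mem_of_superset (Metric.ball_mem_nhds _ (by positivity)) hballsub
end
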